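/- Let (B,g_B) be a singular metric such that g_B p is nondegenerate for every p ∈ B (i.e. if g_B p u v = 0 for all v ∈ E_B then u = 0), let f : B → ℝ be any smooth function, and suppose (F,g_F) is radical-stationary. Then the warped product (M, g) = B ×_f F is radical-stationary. -/

import Mathlib

noncomputable section

section Basic

variable {E : Type*} [NormedAddCommGroup E] [NormedSpace ℝ E]

/-- The Lie bracket of two vector fields. -/
def lieB (X Y : E → E) : E → E :=
  fun p => fderiv ℝ Y p (X p) - fderiv ℝ X p (Y p)

/-- The Koszul form of a singular metric `g`. -/
def koszul (g : E → (E →L[ℝ] E →L[ℝ] ℝ)) (X Y Z : E → E) : E → ℝ :=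
  fun p =>
    (1 / 2) * (fderiv ℝ (fun x => g x (Y x) (Z x)) p (X p)
      + fderiv ℝ (fun x => g x (Z x) (X x)) p (Y p)
      - fderiv ℝ (fun x => g x (X x) (Y x)) p (Z p)
      - g p (X p) (lieB Y Z p)
      + g p (Y p) (lieB Z X p)
      + g p (Z p) (lieB X Y p))

/-- `g` is a singular (semi-Riemannian) metric on `M`: smooth and pointwise symmetric. -/
def IsSingularMetric (M : Set E) (g : E → (E →L[ℝ] E →L[ℝ] ℝ)) : Prop :=
  ContDiffOn ℝ (⊤ : ℕ∞) g M ∧ ∀ p ∈ M, ∀ u v : E, g p u v = g p v u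

/-- `w` represents the 1-form `κ(X,Y,_)` at `p` via the metric `g`. -/
def KoszulWitness (M : Set E) (g : E → (E →L[ℝ] E →L[ℝ] ℝ)) (X Y : E → E)
    (p w : E) : Prop :=
  ∀ Z : E → E, ContDiffOn ℝ (⊤ : ℕ∞) Z M → koszul g X Y Z p = g p w (Z p)

/-- `(M,g)` is radical-stationary. -/
def RadicalStationary (M : Set E) (g : E → (E →L[ℝ] E →L[ℝ] ℝ)) : Prop :=
  ∀ X Y : E → E, ContDiffOn ℝ (⊤ : ℕ∞) X M → ContDiffOn ℝ (⊤ : ℕ∞) Y M →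
    ∀ p ∈ M, ∃ w : E, KoszulWitness M g X Y p w

/-- `(M,g)` is semi-regular: radical-stationary and every covariant contraction
`κ(X,Y,•)κ(Z,T,•)` is a (well-defined) smooth function on `M`. -/
def SemiRegular (M : Set E) (g : E → (E →L[ℝ] E →L[ℝ] ℝ)) : Prop :=
  RadicalStationary M g ∧
  ∀ X Y Z T : E → E, ContDiffOn ℝ (⊤ : ℕ∞) X M → ContDiffOn ℝ (⊤ : ℕ∞) Y M →
    ContDiffOn ℝ (⊤ : ℕ∞) Z M → ContDiffOn ℝ (⊤ : ℕ∞) T M →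
    ∃ k : E → ℝ, ContDiffOn ℝ (⊤ : ℕ∞) k M ∧
      ∀ p ∈ M, ∀ w₁ w₂ : E,
        KoszulWitness M g X Y p w₁ → KoszulWitness M g Z T p w₂ →
          k p = g p w₁ w₂

/-- The differential of `f` is radical-annihilator on `B`. -/
def DiffRadicalAnnihilator (B : Set E) (g : E → (E →L[ℝ] E →L[ℝ] ℝ))
    (f : E → ℝ) : Prop :=
  ∀ p ∈ B, ∃ w : E, ∀ z : E, fderiv ℝ f p z = g p w z

/-- `df ∈ Ω¹_s(B)`: `df` is radical-annihilator and the 1-forms `Y ↦ (∇_X df)(Y)`,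
`(∇_X df)(Y) := X(Y f) - κ(X,Y,•)(df)(•)`, are radical-annihilator. -/
def DiffInOmega1s (B : Set E) (g : E → (E →L[ℝ] E →L[ℝ] ℝ)) (f : E → ℝ) : Prop :=
  DiffRadicalAnnihilator B g f ∧
  ∀ X : E → E, ContDiffOn ℝ (⊤ : ℕ∞) X B → ∀ p ∈ B, ∃ w : E,
    ∀ Y : E → E, ContDiffOn ℝ (⊤ : ℕ∞) Y B → ∀ w₁ w₂ : E,
      KoszulWitness B g X Y p w₁ → (∀ z : E, fderiv ℝ f p z = g p w₂ z) →
        fderiv ℝ (fun x => fderiv ℝ f x (Y x)) p (X p) - g p w₁ w₂ = g p w (Y p)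

/-- The value of the Riemann curvature tensor
`R(X,Y,Z,T) = X κ(Y,Z,T) - Y κ(X,Z,T) - κ([X,Y],Z,T) + κ(X,Z,•)κ(Y,T,•) - κ(Y,Z,•)κ(X,T,•)`
at `p`, written using vectors `w₁, w₂, w₃, w₄` representing the 1-forms
`κ(X,Z,_), κ(Y,T,_), κ(Y,Z,_), κ(X,T,_)` at `p`, so that the covariant contractions
are `g p w₁ w₂` and `g p w₃ w₄`. -/
def riemannExpr (g : E → (E →L[ℝ] E →L[ℝ] ℝ)) (X Y Z T : E → E) (p : E)
    (w₁ w₂ w₃ w₄ : E) : ℝ :=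
  fderiv ℝ (koszul g Y Z T) p (X p) - fderiv ℝ (koszul g X Z T) p (Y p)
    - koszul g (lieB X Y) Z T p + g p w₁ w₂ - g p w₃ w₄

end Basic

section Warped

variable {E₁ E₂ : Type*} [NormedAddCommGroup E₁] [NormedSpace ℝ E₁]
  [NormedAddCommGroup E₂] [NormedSpace ℝ E₂]

/-- Lift a bilinear form on `E₁` to `E₁ × E₂` (acting through the first factor). -/
def liftBilinFst (b : E₁ →L[ℝ] E₁ →L[ℝ] ℝ) :
    (E₁ × E₂) →L[ℝ] (E₁ × E₂) →L[ℝ] ℝ :=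
  (((b.comp (ContinuousLinearMap.fst ℝ E₁ E₂)).flip).comp
    (ContinuousLinearMap.fst ℝ E₁ E₂)).flip

/-- Lift a bilinear form on `E₂` to `E₁ × E₂` (acting through the second factor). -/
def liftBilinSnd (b : E₂ →L[ℝ] E₂ →L[ℝ] ℝ) :
    (E₁ × E₂) →L[ℝ] (E₁ × E₂) →L[ℝ] ℝ :=
  (((b.comp (ContinuousLinearMap.snd ℝ E₁ E₂)).flip).comp
    (ContinuousLinearMap.snd ℝ E₁ E₂)).flip

/-- The warped product metric `g = g_B + f² g_F` on `B × F ⊆ E₁ × E₂`: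
`g (p,q) ((u₁,u₂),(v₁,v₂)) = g_B p u₁ v₁ + f(p)² * g_F q u₂ v₂`. -/
def warpedMetric (gB : E₁ → (E₁ →L[ℝ] E₁ →L[ℝ] ℝ))
    (gF : E₂ → (E₂ →L[ℝ] E₂ →L[ℝ] ℝ)) (f : E₁ → ℝ) :
    (E₁ × E₂) → ((E₁ × E₂) →L[ℝ] (E₁ × E₂) →L[ℝ] ℝ) :=
  fun x => liftBilinFst (gB x.1) + (f x.1) ^ 2 • liftBilinSnd (gF x.2)

/-- The lift to `E₁ × E₂` of a vector field on the base. -/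
def liftVecB (X : E₁ → E₁) : (E₁ × E₂) → (E₁ × E₂) := fun x => (X x.1, 0)

/-- The lift to `E₁ × E₂` of a vector field on the fiber. -/
def liftVecF (V : E₂ → E₂) : (E₁ × E₂) → (E₁ × E₂) := fun x => (0, V x.2)

end Warped

/-!
At a point where `g` is symmetric, the Koszul form is `κ(X, Y, Z) = Γ(X, Y, Z) + ⟨D_X Y, Z⟩`,
where `Γ(a, b, z) = ½ (∂_a g(b, z) + ∂_b g(z, a) - ∂_z g(a, b))` only depends on the values of
the fields at that point. Since `⟨D_X Y, ·⟩` is represented by `D_X Y`, radical-stationarity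
just asks that every 1-form `Γ(a, b, ·)` be `g`-representable. For the warped metric `Γ` splits
into the base form `Γ_B(a₁, b₁, z₁) - f df(z₁) g_F(a₂, b₂)`, represented because `g_B` is
nondegenerate, and the fibre form
`f² Γ_F(a₂, b₂, z₂) + f (df(a₁) g_F(b₂, z₂) + df(b₁) g_F(a₂, z₂))`, represented by
`w_F + f⁻¹ (df(a₁) b₂ + df(b₁) a₂)` where `w_F` represents `Γ_F(a₂, b₂, ·)`.
-/

theorem ContDiffOn.differentiableAt_of_isOpen {𝕜 E F : Type*} [NontriviallyNormedField 𝕜]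
    [NormedAddCommGroup E] [NormedSpace 𝕜 E] [NormedAddCommGroup F] [NormedSpace 𝕜 F]
    {n : WithTop ℕ∞} {s : Set E} {h : E → F} {x : E} (hh : ContDiffOn 𝕜 n h s) (hn : n ≠ 0)
    (hs : IsOpen s) (hx : x ∈ s) : DifferentiableAt 𝕜 h x :=
  (hh.differentiableOn hn).differentiableAt (hs.mem_nhds hx)

section Koszul

variable {E : Type*} [NormedAddCommGroup E] [NormedSpace ℝ E]

def christoffelForm (g : E → (E →L[ℝ] E →L[ℝ] ℝ)) (p a b : E) : E →ₗ[ℝ] ℝ where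
  toFun z := (1 / 2) * (fderiv ℝ g p a b z + fderiv ℝ g p b z a - fderiv ℝ g p z a b)
  map_add' z z' := by simp only [map_add, add_apply]; ring
  map_smul' c z := by
    simp only [map_smul, smul_apply, smul_eq_mul, RingHom.id_apply]; ring

lemma fderiv_apply_apply_const {g : E → (E →L[ℝ] E →L[ℝ] ℝ)} {p : E}
    (hg : DifferentiableAt ℝ g p) (u v w : E) :
    fderiv ℝ (fun x => g x v w) p u = fderiv ℝ g p u v w := by
  rw [fderiv_clm_apply (hg.clm_apply (differentiableAt_const v)) (differentiableAt_const w),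
    fderiv_clm_apply hg (differentiableAt_const v)]
  simp

lemma fderiv_apply_apply {g : E → (E →L[ℝ] E →L[ℝ] ℝ)} {Y Z : E → E} {p : E}
    (hg : DifferentiableAt ℝ g p) (hY : DifferentiableAt ℝ Y p) (hZ : DifferentiableAt ℝ Z p)
    (u : E) :
    fderiv ℝ (fun x => g x (Y x) (Z x)) p u
      = fderiv ℝ g p u (Y p) (Z p) + g p (fderiv ℝ Y p u) (Z p) + g p (Y p) (fderiv ℝ Z p u) := by
  rw [fderiv_clm_apply (hg.clm_apply hY) hZ, fderiv_clm_apply hg hY]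
  simp only [add_apply, ContinuousLinearMap.coe_comp, Function.comp_apply,
    ContinuousLinearMap.flip_apply]
  ring

lemma koszul_const {g : E → (E →L[ℝ] E →L[ℝ] ℝ)} {p : E} (hg : DifferentiableAt ℝ g p)
    (a b z : E) :
    koszul g (fun _ => a) (fun _ => b) (fun _ => z) p = christoffelForm g p a b z := by
  simp [koszul, lieB, christoffelForm, fderiv_apply_apply_const hg]

lemma koszul_eq_christoffelForm_add {g : E → (E →L[ℝ] E →L[ℝ] ℝ)} {X Y Z : E → E} {p : E}
    (hg : DifferentiableAt ℝ g p) (hsymm : ∀ u v, g p u v = g p v u)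
    (hX : DifferentiableAt ℝ X p) (hY : DifferentiableAt ℝ Y p) (hZ : DifferentiableAt ℝ Z p) :
    koszul g X Y Z p
      = christoffelForm g p (X p) (Y p) (Z p) + g p (fderiv ℝ Y p (X p)) (Z p) := by
  simp only [koszul, lieB, christoffelForm, LinearMap.coe_mk, AddHom.coe_mk,
    fderiv_apply_apply hg hY hZ, fderiv_apply_apply hg hZ hX, fderiv_apply_apply hg hX hY, map_sub]
  linear_combination (1 / 2 : ℝ) * (hsymm (Z p) (fderiv ℝ Y p (X p))
    - hsymm (X p) (fderiv ℝ Z p (Y p)) + hsymm (Y p) (fderiv ℝ X p (Z p)))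

theorem radicalStationary_iff {M : Set E} {g : E → (E →L[ℝ] E →L[ℝ] ℝ)} (hM : IsOpen M)
    (hg : IsSingularMetric M g) :
    RadicalStationary M g ↔
      ∀ p ∈ M, ∀ a b : E, ∃ w : E, ∀ z : E, christoffelForm g p a b z = g p w z := by
  have hgp : ∀ p ∈ M, DifferentiableAt ℝ g p := fun p hp =>
    hg.1.differentiableAt_of_isOpen (by simp) hM hp
  constructor
  · intro hrs p hp a b
    obtain ⟨w, hw⟩ := hrs (fun _ => a) (fun _ => b) contDiffOn_const contDiffOn_const p hp
    exact ⟨w, fun z => by simpa [koszul_const (hgp p hp)] using hw (fun _ => z) contDiffOn_const⟩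
  · intro hΓ X Y hX hY p hp
    obtain ⟨w, hw⟩ := hΓ p hp (X p) (Y p)
    refine ⟨w + fderiv ℝ Y p (X p), fun Z hZ => ?_⟩
    rw [koszul_eq_christoffelForm_add (hgp p hp) (hg.2 p hp)
      (hX.differentiableAt_of_isOpen (by simp) hM hp)
      (hY.differentiableAt_of_isOpen (by simp) hM hp)
      (hZ.differentiableAt_of_isOpen (by simp) hM hp), hw, map_add, add_apply]

end Koszul

lemma exists_eq_apply_of_separatingLeft {E : Type*} [NormedAddCommGroup E] [NormedSpace ℝ E]
    [FiniteDimensional ℝ E] (b : E →L[ℝ] E →L[ℝ] ℝ) (hb : ∀ u, (∀ v, b u v = 0) → u = 0)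
    (φ : Module.Dual ℝ E) : ∃ w : E, ∀ z : E, φ z = b w z := by
  have hB : LinearMap.BilinForm.Nondegenerate b.toLinearMap₁₂ :=
    LinearMap.BilinForm.Nondegenerate.ofSeparatingLeft hb
  exact ⟨(LinearMap.BilinForm.toDual _ hB).symm φ, fun z => by
    rw [← ContinuousLinearMap.toLinearMap₁₂_apply_apply_apply, ← LinearMap.BilinForm.toDual_def hB,
      LinearEquiv.apply_symm_apply]⟩

section BilinearComp

variable {𝕜 X E F G E' F' : Type*} [NontriviallyNormedField 𝕜]
  [NormedAddCommGroup X] [NormedSpace 𝕜 X] [NormedAddCommGroup E] [NormedSpace 𝕜 E]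
  [NormedAddCommGroup F] [NormedSpace 𝕜 F] [NormedAddCommGroup G] [NormedSpace 𝕜 G]
  [NormedAddCommGroup E'] [NormedSpace 𝕜 E'] [NormedAddCommGroup F'] [NormedSpace 𝕜 F']
  {g : X → E →L[𝕜] F →L[𝕜] G}

-- Instance search misses this for spaces of bilinear maps.
instance : IsBoundedSMul 𝕜 (E →L[𝕜] F →L[𝕜] G) :=
  NormedSpace.toIsBoundedSMul (𝕜 := 𝕜) (E := E →L[𝕜] F →L[𝕜] G)

lemma bilinearComp_eq_compL (b : E →L[𝕜] F →L[𝕜] G) (gE : E' →L[𝕜] E) (gF : F' →L[𝕜] F) :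
    b.bilinearComp gE gF = ((ContinuousLinearMap.compL 𝕜 F' F G).flip gF).comp (b.comp gE) :=
  rfl

theorem ContDiffOn.bilinearComp {n : WithTop ℕ∞} {s : Set X} (hg : ContDiffOn 𝕜 n g s)
    (gE : E' →L[𝕜] E) (gF : F' →L[𝕜] F) :
    ContDiffOn 𝕜 n (fun x => (g x).bilinearComp gE gF) s := by
  simp only [bilinearComp_eq_compL]
  exact contDiffOn_const.clm_comp (hg.clm_comp contDiffOn_const)

theorem DifferentiableAt.bilinearComp {x : X} (hg : DifferentiableAt 𝕜 g x)
    (gE : E' →L[𝕜] E) (gF : F' →L[𝕜] F) :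
    DifferentiableAt 𝕜 (fun x => (g x).bilinearComp gE gF) x := by
  simp only [bilinearComp_eq_compL]
  exact (differentiableAt_const _).clm_comp (hg.clm_comp (differentiableAt_const _))

end BilinearComp

section Warped

variable {E₁ E₂ : Type*} [NormedAddCommGroup E₁] [NormedSpace ℝ E₁]
  [NormedAddCommGroup E₂] [NormedSpace ℝ E₂]
  {gB : E₁ → (E₁ →L[ℝ] E₁ →L[ℝ] ℝ)} {gF : E₂ → (E₂ →L[ℝ] E₂ →L[ℝ] ℝ)} {f : E₁ → ℝ}

@[simp] lemma liftBilinSnd_apply (b : E₂ →L[ℝ] E₂ →L[ℝ] ℝ) (u v : E₁ × E₂) :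
    liftBilinSnd b u v = b u.2 v.2 := rfl

@[simp] lemma warpedMetric_apply (x u v : E₁ × E₂) :
    warpedMetric gB gF f x u v = gB x.1 u.1 v.1 + f x.1 ^ 2 * gF x.2 u.2 v.2 := rfl

lemma warpedMetric_eq_bilinearComp : warpedMetric gB gF f = fun x =>
    (gB x.1).bilinearComp (.fst ℝ E₁ E₂) (.fst ℝ E₁ E₂)
      + f x.1 ^ 2 • (gF x.2).bilinearComp (.snd ℝ E₁ E₂) (.snd ℝ E₁ E₂) :=
  rfl

theorem isSingularMetric_warpedMetric {B : Set E₁} {F : Set E₂} (hgB : IsSingularMetric B gB)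
    (hgF : IsSingularMetric F gF) (hf : ContDiffOn ℝ (⊤ : ℕ∞) f B) :
    IsSingularMetric (B ×ˢ F) (warpedMetric gB gF f) := by
  refine ⟨?_, fun x hx u v => by simp [hgB.2 x.1 hx.1, hgF.2 x.2 hx.2]⟩
  rw [warpedMetric_eq_bilinearComp]
  exact ((hgB.1.comp contDiffOn_fst Set.mapsTo_fst_prod).bilinearComp _ _).add
    (((hf.comp contDiffOn_fst Set.mapsTo_fst_prod).pow 2).smul
      ((hgF.1.comp contDiffOn_snd Set.mapsTo_snd_prod).bilinearComp _ _))

lemma differentiableAt_warpedMetric {x : E₁ × E₂} (hgB : DifferentiableAt ℝ gB x.1)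
    (hgF : DifferentiableAt ℝ gF x.2) (hf : DifferentiableAt ℝ f x.1) :
    DifferentiableAt ℝ (warpedMetric gB gF f) x := by
  rw [warpedMetric_eq_bilinearComp]
  have hB := (DifferentiableAt.comp (𝕜 := ℝ) (G := E₁ →L[ℝ] E₁ →L[ℝ] ℝ) x hgB
    differentiableAt_fst).bilinearComp (.fst ℝ E₁ E₂) (.fst ℝ E₁ E₂)
  have hF := (DifferentiableAt.comp (𝕜 := ℝ) (G := E₂ →L[ℝ] E₂ →L[ℝ] ℝ) x hgF
    differentiableAt_snd).bilinearComp (.snd ℝ E₁ E₂) (.snd ℝ E₁ E₂)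
  have hf2 : DifferentiableAt ℝ (fun y : E₁ × E₂ => f y.1 ^ 2) x :=
    (hf.comp x differentiableAt_fst).pow 2
  exact hB.fun_add (F := E₁ × E₂ →L[ℝ] E₁ × E₂ →L[ℝ] ℝ)
    (hf2.fun_smul (F := E₁ × E₂ →L[ℝ] E₁ × E₂ →L[ℝ] ℝ) hF)

lemma fderiv_warpedMetric_apply {x : E₁ × E₂} (hgB : DifferentiableAt ℝ gB x.1)
    (hgF : DifferentiableAt ℝ gF x.2) (hf : DifferentiableAt ℝ f x.1) (u v w : E₁ × E₂) :
    fderiv ℝ (warpedMetric gB gF f) x u v w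
      = fderiv ℝ gB x.1 u.1 v.1 w.1 + 2 * f x.1 * fderiv ℝ f x.1 u.1 * gF x.2 v.2 w.2
        + f x.1 ^ 2 * fderiv ℝ gF x.2 u.2 v.2 w.2 := by
  have hB := ((hgB.clm_apply (differentiableAt_const v.1)).clm_apply
    (differentiableAt_const w.1)).hasFDerivAt.comp x hasFDerivAt_fst
  have hF := ((hgF.clm_apply (differentiableAt_const v.2)).clm_apply
    (differentiableAt_const w.2)).hasFDerivAt.comp x hasFDerivAt_snd
  have hf' := hf.hasFDerivAt.comp x hasFDerivAt_fst
  have hg : HasFDerivAt (fun y => warpedMetric gB gF f y v w) _ x :=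
    hB.add ((hf'.pow 2).mul hF)
  rw [← fderiv_apply_apply_const (differentiableAt_warpedMetric hgB hgF hf), hg.fderiv]
  simp [fderiv_apply_apply_const hgB, fderiv_apply_apply_const hgF]
  ring

lemma christoffelForm_warpedMetric {x : E₁ × E₂} (hgB : DifferentiableAt ℝ gB x.1)
    (hgF : DifferentiableAt ℝ gF x.2) (hf : DifferentiableAt ℝ f x.1) (a b z : E₁ × E₂) :
    christoffelForm (warpedMetric gB gF f) x a b z
      = christoffelForm gB x.1 a.1 b.1 z.1 + f x.1 ^ 2 * christoffelForm gF x.2 a.2 b.2 z.2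
        + f x.1 * (fderiv ℝ f x.1 a.1 * gF x.2 b.2 z.2 + fderiv ℝ f x.1 b.1 * gF x.2 z.2 a.2
          - fderiv ℝ f x.1 z.1 * gF x.2 a.2 b.2) := by
  simp only [christoffelForm, LinearMap.coe_mk, AddHom.coe_mk,
    fderiv_warpedMetric_apply hgB hgF hf]
  ring

end Warped

theorem warpedProduct_radicalStationary_of_nondegenerate_base_general
    {E₁ E₂ : Type*} [NormedAddCommGroup E₁] [NormedSpace ℝ E₁] [FiniteDimensional ℝ E₁]
    [NormedAddCommGroup E₂] [NormedSpace ℝ E₂]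
    (B : Set E₁) (F : Set E₂) (hB : IsOpen B) (hF : IsOpen F)
    (gB : E₁ → (E₁ →L[ℝ] E₁ →L[ℝ] ℝ)) (gF : E₂ → (E₂ →L[ℝ] E₂ →L[ℝ] ℝ))
    (hgB : IsSingularMetric B gB) (hgF : IsSingularMetric F gF)
    (hnd : ∀ p ∈ B, ∀ u : E₁, (∀ v : E₁, gB p u v = 0) → u = 0)
    (hrsF : RadicalStationary F gF)
    (f : E₁ → ℝ) (hf : ContDiffOn ℝ (⊤ : ℕ∞) f B) :
    RadicalStationary (B ×ˢ F) (warpedMetric gB gF f) := by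
  rw [radicalStationary_iff (hB.prod hF) (isSingularMetric_warpedMetric hgB hgF hf)]
  rintro ⟨p, q⟩ ⟨hp, hq⟩ a b
  obtain ⟨wF, hwF⟩ := (radicalStationary_iff hF hgF).1 hrsF q hq a.2 b.2
  set Df := fderiv ℝ f p
  obtain ⟨wB, hwB⟩ := exists_eq_apply_of_separatingLeft (gB p) (hnd p hp)
    (christoffelForm gB p a.1 b.1 - (f p * gF q a.2 b.2) • Df.toLinearMap)
  -- `(f p)⁻¹` is junk when `f p = 0`, but then the fibre part of `g` vanishes at `(p, q)`.
  refine ⟨(wB, wF + (f p)⁻¹ • (Df a.1 • b.2 + Df b.1 • a.2)), fun z => ?_⟩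
  have hBz := hwB z.1
  have hFz := hwF z.2
  simp only [LinearMap.sub_apply, LinearMap.smul_apply, ContinuousLinearMap.coe_coe,
    smul_eq_mul] at hBz
  rw [christoffelForm_warpedMetric (hgB.1.differentiableAt_of_isOpen (by simp) hB hp)
    (hgF.1.differentiableAt_of_isOpen (by simp) hF hq)
    (hf.differentiableAt_of_isOpen (by simp) hB hp), warpedMetric_apply]
  simp only [map_add, map_smul, add_apply, smul_apply, smul_eq_mul]
  rw [hgF.2 q hq z.2 a.2]
  linear_combination hBz + f p ^ 2 * hFz
    - (Df a.1 * gF q b.2 z.2 + Df b.1 * gF q a.2 z.2) * mul_self_mul_inv (f p)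

/-- If `g_B` is pointwise nondegenerate and `(F,g_F)` is
radical-stationary, then the warped product is radical-stationary, for any smooth
warping function. -/
theorem warpedProduct_radicalStationary_of_nondegenerate_base
    {E₁ E₂ : Type*} [NormedAddCommGroup E₁] [NormedSpace ℝ E₁] [FiniteDimensional ℝ E₁]
    [NormedAddCommGroup E₂] [NormedSpace ℝ E₂] [FiniteDimensional ℝ E₂]
    (B : Set E₁) (F : Set E₂) (hB : IsOpen B) (hF : IsOpen F)
    (gB : E₁ → (E₁ →L[ℝ] E₁ →L[ℝ] ℝ)) (gF : E₂ → (E₂ →L[ℝ] E₂ →L[ℝ] ℝ))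
    (hgB : IsSingularMetric B gB) (hgF : IsSingularMetric F gF)
    (hnd : ∀ p ∈ B, ∀ u : E₁, (∀ v : E₁, gB p u v = 0) → u = 0)
    (hrsF : RadicalStationary F gF)
    (f : E₁ → ℝ) (hf : ContDiffOn ℝ (⊤ : ℕ∞) f B) :
    RadicalStationary (B ×ˢ F) (warpedMetric gB gF f) :=
  warpedProduct_radicalStationary_of_nondegenerate_base_general B F hB hF gB gF hgB hgF hnd hrsF f
    hf
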